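/- arXiv:2406.05946 — 4 statements merged into one kernel-verified Lean document; each statement's English description precedes it below -/
import Mathlib

section
/- Let (Ω, μ) be a probability space and Δ : Ω → ℝ a random variable with ∫ Δ² dμ < ∞. Then for every β > 0, the scaled softplus loss satisfies the approximation bound | ∫ (2/β)·S(β·Δ(ω)) dμ(ω) − ( (2/β)·log 2 + ∫ Δ(ω) dμ(ω) ) | ≤ (β/2)·∫ Δ(ω)² dμ(ω). In particular, ∫ (2/β)·S(βΔ) dμ minus the constant (2/β)·log 2 converges to ∫ Δ dμ as β → 0⁺, with error O(β). -/
open MeasureTheory Real Filter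

/-- The softplus function `S(z) = log(1 + e^z)`. -/
noncomputable def softplus (z : ℝ) : ℝ := Real.log (1 + Real.exp z)

lemma softplus_key (z : ℝ) : |2 * softplus z - 2 * Real.log 2 - z| ≤ z ^ 2 / 2 := by
  have hez : (0:ℝ) < 1 + Real.exp z := by positivity
  have hh : Real.exp (z/2) ^ 2 = Real.exp z := by
    rw [sq, ← Real.exp_add]; norm_num
  -- lower bound
  have hlow : 2 * Real.log 2 + z ≤ 2 * softplus z := by
    have h1 : 2 * Real.exp (z/2) ≤ 1 + Real.exp z := by
      nlinarith [sq_nonneg (1 - Real.exp (z/2)), Real.exp_pos (z/2)]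
    have h2 : Real.log (2 * Real.exp (z/2)) ≤ Real.log (1 + Real.exp z) :=
      Real.log_le_log (by positivity) h1
    rw [Real.log_mul (by norm_num) (Real.exp_ne_zero _), Real.log_exp] at h2
    unfold softplus; linarith
  -- upper bound
  have hup : 2 * softplus z - 2 * Real.log 2 - z ≤ z ^ 2 / 2 := by
    rcases le_or_gt |z| 2 with hz | hz
    · -- cosh-type bound
      set t := z / 2 with ht
      have habs : |t| ≤ 1 := by rw [ht, abs_div]; simp only [abs_two]; linarith
      have hb1 : Real.exp t ≤ 1 + t + (3/4) * t ^ 2 := by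
        have := Real.exp_bound habs (by norm_num : 0 < 2)
        have h' := (abs_sub_le_iff.1 this).1
        simp [Finset.sum_range_succ, Nat.factorial] at h'
        nlinarith [sq_abs t]
      have hb2 : Real.exp (-t) ≤ 1 - t + (3/4) * t ^ 2 := by
        have habs' : |(-t)| ≤ 1 := by rwa [abs_neg]
        have := Real.exp_bound habs' (by norm_num : 0 < 2)
        have h' := (abs_sub_le_iff.1 this).1
        simp [Finset.sum_range_succ, Nat.factorial] at h'
        nlinarith [sq_abs t]
      -- softplus z = t + log (exp t + exp (-t))
      have hsp : softplus z = t + Real.log (Real.exp t + Real.exp (-t)) := by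
        unfold softplus
        have : 1 + Real.exp z = Real.exp t * (Real.exp t + Real.exp (-t)) := by
          rw [mul_add, ← Real.exp_add, ← Real.exp_add, add_neg_cancel, Real.exp_zero, ht,
            show z / 2 + z / 2 = z from by ring]
          ring
        rw [this, Real.log_mul (Real.exp_ne_zero _) (by positivity), Real.log_exp]
      have hlog : Real.log (Real.exp t + Real.exp (-t)) - Real.log 2
          ≤ (Real.exp t + Real.exp (-t)) / 2 - 1 := by
        have := Real.log_le_sub_one_of_pos
          (show (0:ℝ) < (Real.exp t + Real.exp (-t)) / 2 by positivity)
        rwa [Real.log_div (by positivity) (by norm_num)] at this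
      have : 2 * softplus z - 2 * Real.log 2 - z
          ≤ (Real.exp t + Real.exp (-t)) - 2 := by
        rw [hsp]; rw [ht]; linarith
      calc 2 * softplus z - 2 * Real.log 2 - z ≤ (Real.exp t + Real.exp (-t)) - 2 := this
        _ ≤ (3/2) * t ^ 2 := by linarith
        _ ≤ z ^ 2 / 2 := by rw [ht]; nlinarith
    · -- |z| large: linear bound suffices
      have hfz : 2 * softplus z - 2 * Real.log 2 - z ≤ |z| := by
        rcases le_or_gt 0 z with hz0 | hz0
        · have h1 : 1 + Real.exp z ≤ 2 * Real.exp z := by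
            nlinarith [Real.one_le_exp hz0]
          have h2 : Real.log (1 + Real.exp z) ≤ Real.log (2 * Real.exp z) :=
            Real.log_le_log hez h1
          rw [Real.log_mul (by norm_num) (Real.exp_ne_zero _), Real.log_exp] at h2
          unfold softplus
          rw [abs_of_nonneg hz0]; linarith
        · have h1 : 1 + Real.exp z ≤ 2 := by
            nlinarith [Real.exp_lt_one_iff.2 hz0]
          have h2 : Real.log (1 + Real.exp z) ≤ Real.log 2 :=
            Real.log_le_log hez h1
          unfold softplus
          rw [abs_of_neg hz0]; linarith
      have : |z| ≤ z ^ 2 / 2 := by nlinarith [sq_abs z, abs_nonneg z]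
      linarith
  rw [abs_le]; constructor <;> linarith

/-- For a random variable `Δ` on a probability space with `∫ Δ² dμ < ∞`, and any `β > 0`,
the scaled softplus loss `∫ (2/β)·S(βΔ) dμ` approximates `(2/β)·log 2 + ∫ Δ dμ`
with error at most `(β/2)·∫ Δ² dμ`. -/
theorem stmt0 {Ω : Type*} [MeasurableSpace Ω] (μ : Measure Ω) [IsProbabilityMeasure μ]
    (Δ : Ω → ℝ) (hΔ : MemLp Δ 2 μ) (β : ℝ) (hβ : 0 < β) :
    |(∫ ω, (2 / β) * softplus (β * Δ ω) ∂μ) -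
        ((2 / β) * Real.log 2 + ∫ ω, Δ ω ∂μ)| ≤ (β / 2) * ∫ ω, (Δ ω) ^ 2 ∂μ := by
  have hint1 : Integrable Δ μ := hΔ.integrable one_le_two
  have hint2 : Integrable (fun ω => Δ ω ^ 2) μ := hΔ.integrable_sq
  set g : Ω → ℝ := fun ω => (2 / β) * softplus (β * Δ ω) - (2 / β) * Real.log 2 - Δ ω
    with hg
  have hgb : ∀ ω, |g ω| ≤ (β / 2) * Δ ω ^ 2 := by
    intro ω
    have h := softplus_key (β * Δ ω)
    have : g ω = (1 / β) * (2 * softplus (β * Δ ω) - 2 * Real.log 2 - (β * Δ ω)) := by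
      rw [hg]; field_simp
    rw [this, abs_mul, abs_of_pos (by positivity : (0:ℝ) < 1/β)]
    calc (1 / β) * |2 * softplus (β * Δ ω) - 2 * Real.log 2 - β * Δ ω|
        ≤ (1 / β) * ((β * Δ ω) ^ 2 / 2) := by
          apply mul_le_mul_of_nonneg_left h (by positivity)
      _ = (β / 2) * Δ ω ^ 2 := by field_simp
  have hcont : Continuous softplus := by
    unfold softplus
    exact (continuous_const.add Real.continuous_exp).log (fun x => (by positivity : (0:ℝ) < 1 + Real.exp x).ne')
  have hsm : AEStronglyMeasurable (fun ω => (2 / β) * softplus (β * Δ ω)) μ := by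
    exact (continuous_const.mul (hcont.comp (continuous_const.mul continuous_id))).comp_aestronglyMeasurable hΔ.1
  have hgsm : AEStronglyMeasurable g μ :=
    (hsm.sub aestronglyMeasurable_const).sub hΔ.1
  have hgint : Integrable g μ := by
    refine Integrable.mono' (hint2.const_mul (β / 2)) hgsm ?_
    filter_upwards with ω
    simpa [Real.norm_eq_abs] using hgb ω
  have hspint : Integrable (fun ω => (2 / β) * softplus (β * Δ ω)) μ := by
    have : (fun ω => (2 / β) * softplus (β * Δ ω))
        = fun ω => g ω + ((2 / β) * Real.log 2 + Δ ω) := by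
      funext ω; rw [hg]; ring
    rw [this]
    exact hgint.add ((integrable_const _).add hint1)
  have hkey : ∫ ω, g ω ∂μ = (∫ ω, (2 / β) * softplus (β * Δ ω) ∂μ) -
      ((2 / β) * Real.log 2 + ∫ ω, Δ ω ∂μ) := by
    have e1 : ∫ ω, g ω ∂μ
        = (∫ ω, ((2 / β) * softplus (β * Δ ω) - (2 / β) * Real.log 2) ∂μ)
          - ∫ ω, Δ ω ∂μ := integral_sub (hspint.sub (integrable_const _)) hint1
    have e2 : (∫ ω, ((2 / β) * softplus (β * Δ ω) - (2 / β) * Real.log 2) ∂μ)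
        = (∫ ω, (2 / β) * softplus (β * Δ ω) ∂μ) - ∫ ω, ((2 / β) * Real.log 2 : ℝ) ∂μ :=
      integral_sub hspint (integrable_const _)
    rw [e1, e2, integral_const]
    simp [measure_univ]
    ring
  rw [← hkey]
  calc |∫ ω, g ω ∂μ| ≤ ∫ ω, |g ω| ∂μ := by
        simpa [Real.norm_eq_abs] using norm_integral_le_integral_norm g (μ := μ)
    _ ≤ ∫ ω, (β / 2) * Δ ω ^ 2 ∂μ := by
        apply integral_mono hgint.abs (hint2.const_mul _) (fun ω => hgb ω)
    _ = (β / 2) * ∫ ω, Δ ω ^ 2 ∂μ := integral_const_mul _ _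
end

section
/- Let (Ω, μ) be a probability space and Δ : Ω → ℝ a random variable with ∫ Δ² dμ < ∞. Then the limit lim_{β → 0⁺} ( ∫ (2/β)·S(β·Δ(ω)) dμ(ω) − (2/β)·log 2 ) exists and equals ∫ Δ(ω) dμ(ω). -/
open MeasureTheory Real Filter

lemma softplus_eq (z : ℝ) :
    softplus z = Real.log 2 + z / 2 + Real.log (Real.cosh (z / 2)) := by
  have e1 : Real.exp (z / 2) * Real.exp (z / 2) = Real.exp z := by
    rw [← Real.exp_add]; ring_nf
  have e2 : Real.exp (-(z / 2)) * Real.exp (z / 2) = 1 := by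
    rw [← Real.exp_add]; simp
  have h : (1 + Real.exp z) = 2 * Real.cosh (z / 2) * Real.exp (z / 2) := by
    rw [Real.cosh_eq]
    linear_combination -e1 - e2
  have h2 : (0:ℝ) < Real.cosh (z / 2) := Real.cosh_pos (z / 2)
  rw [softplus, h, Real.log_mul (by positivity) (Real.exp_pos _).ne',
    Real.log_mul (by norm_num) h2.ne', Real.log_exp]
  ring

lemma log_cosh_bounds (t : ℝ) : 0 ≤ Real.log (Real.cosh t) ∧ Real.log (Real.cosh t) ≤ t ^ 2 / 2 := by
  constructor
  · exact Real.log_nonneg (Real.one_le_cosh t)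
  · calc Real.log (Real.cosh t) ≤ Real.log (Real.exp (t ^ 2 / 2)) :=
        Real.log_le_log (Real.cosh_pos t) (Real.cosh_le_exp_half_sq t)
    _ = t ^ 2 / 2 := Real.log_exp _

/-- For a random variable `Δ` on a probability space with `∫ Δ² dμ < ∞`, the limit as
`β → 0⁺` of `∫ (2/β)·S(βΔ) dμ − (2/β)·log 2` exists and equals `∫ Δ dμ`. -/
theorem stmt1 {Ω : Type*} [MeasurableSpace Ω] (μ : Measure Ω) [IsProbabilityMeasure μ]
    (Δ : Ω → ℝ) (hΔ : MemLp Δ 2 μ) :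
    Tendsto (fun β : ℝ =>
        (∫ ω, (2 / β) * softplus (β * Δ ω) ∂μ) - (2 / β) * Real.log 2)
      (nhdsWithin 0 (Set.Ioi 0)) (nhds (∫ ω, Δ ω ∂μ)) := by
  have hΔ1 : Integrable Δ μ := hΔ.integrable one_le_two
  have hΔ2 : Integrable (fun ω => Δ ω ^ 2) μ := hΔ.integrable_sq
  set C := ∫ ω, Δ ω ^ 2 ∂μ with hC
  have key : ∀ β : ℝ, 0 < β →
      |(∫ ω, (2 / β) * softplus (β * Δ ω) ∂μ) - (2 / β) * Real.log 2 - ∫ ω, Δ ω ∂μ|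
        ≤ β / 4 * C := by
    intro β hβ
    have hcont : Continuous fun x : ℝ => Real.log (Real.cosh (β * x / 2)) :=
      (Real.continuous_cosh.comp (by continuity)).log fun x => (Real.cosh_pos _).ne'
    have hmeas : AEStronglyMeasurable (fun ω => (2 / β) * Real.log (Real.cosh (β * Δ ω / 2))) μ :=
      ((hcont.comp_aestronglyMeasurable hΔ.aestronglyMeasurable).const_mul _)
    have hbound : ∀ ω, |(2 / β) * Real.log (Real.cosh (β * Δ ω / 2))| ≤ β / 4 * Δ ω ^ 2 := by
      intro ω
      obtain ⟨h0, h1⟩ := log_cosh_bounds (β * Δ ω / 2)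
      rw [abs_mul, abs_of_nonneg h0, abs_of_nonneg (by positivity : (0:ℝ) ≤ 2 / β)]
      calc 2 / β * Real.log (Real.cosh (β * Δ ω / 2)) ≤ 2 / β * ((β * Δ ω / 2) ^ 2 / 2) :=
            mul_le_mul_of_nonneg_left h1 (by positivity)
        _ = β / 4 * Δ ω ^ 2 := by field_simp; ring
    have hint : Integrable (fun ω => (2 / β) * Real.log (Real.cosh (β * Δ ω / 2))) μ := by
      refine Integrable.mono' (hΔ2.const_mul (β / 4)) hmeas ?_
      filter_upwards with ω
      have h := hbound ω
      rw [abs_mul, abs_of_pos (by positivity : (0:ℝ) < 2 / β)] at h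
      simpa [abs_of_pos hβ] using h
    have hI1 : Integrable (fun ω => Δ ω + 2 / β * Real.log 2) μ :=
      hΔ1.add (integrable_const _)
    have hrw : (fun ω => (2 / β) * softplus (β * Δ ω)) =
        fun ω => (Δ ω + (2 / β) * Real.log 2) + (2 / β) * Real.log (Real.cosh (β * Δ ω / 2)) := by
      funext ω
      rw [softplus_eq]
      field_simp
      ring
    have habs : |∫ ω, (2 / β) * Real.log (Real.cosh (β * Δ ω / 2)) ∂μ| ≤ β / 4 * C := by
      calc |∫ ω, (2 / β) * Real.log (Real.cosh (β * Δ ω / 2)) ∂μ|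
          ≤ ∫ ω, |(2 / β) * Real.log (Real.cosh (β * Δ ω / 2))| ∂μ := by simpa only [Real.norm_eq_abs] using norm_integral_le_integral_norm (μ := μ) (fun ω => (2 / β) * Real.log (Real.cosh (β * Δ ω / 2)))
        _ ≤ ∫ ω, β / 4 * Δ ω ^ 2 ∂μ :=
            integral_mono_of_nonneg (Eventually.of_forall fun ω => abs_nonneg _)
              (hΔ2.const_mul (β / 4)) (Eventually.of_forall hbound)
        _ = β / 4 * C := by rw [integral_const_mul]
    rw [hrw, integral_add hI1 hint, integral_add hΔ1 (integrable_const _), integral_const]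
    simp only [probReal_univ, smul_eq_mul, one_mul]
    have heq : (∫ ω, Δ ω ∂μ) + 2 / β * Real.log 2
          + (∫ ω, 2 / β * Real.log (Real.cosh (β * Δ ω / 2)) ∂μ)
          - 2 / β * Real.log 2 - ∫ ω, Δ ω ∂μ
        = ∫ ω, 2 / β * Real.log (Real.cosh (β * Δ ω / 2)) ∂μ := by ring
    rw [heq]
    exact habs
  rw [tendsto_iff_dist_tendsto_zero]
  refine squeeze_zero' (g := fun β => β / 4 * C) (Eventually.of_forall fun β => dist_nonneg) ?_ ?_
  · filter_upwards [self_mem_nhdsWithin] with β hβ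
    rw [Real.dist_eq]
    exact key β hβ
  · have : Tendsto (fun β : ℝ => β / 4 * C) (nhdsWithin 0 (Set.Ioi 0)) (nhds (0 / 4 * C)) :=
      ((tendsto_id.div_const 4).mul_const C).mono_left nhdsWithin_le_nhds
    simpa using this
end

section
/- Let (Ω, μ) be a probability space and Δ : Ω → ℝ an integrable random variable. Then lim_{β → +∞} ∫ (2/β)·S(β·Δ(ω)) dμ(ω) = 2·∫ max{Δ(ω), 0} dμ(ω). -/
open MeasureTheory Real Filter

lemma softplus_lb (z : ℝ) : max z 0 ≤ softplus z := by
  unfold softplus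
  rcases le_total z 0 with h | h
  · simp only [max_eq_right h]
    rw [← Real.log_one]
    apply Real.log_le_log one_pos
    nlinarith [Real.exp_pos z]
  · simp only [max_eq_left h]
    calc z = Real.log (Real.exp z) := (Real.log_exp z).symm
    _ ≤ _ := Real.log_le_log (Real.exp_pos z) (by nlinarith)

lemma softplus_ub (z : ℝ) : softplus z ≤ max z 0 + Real.log 2 := by
  unfold softplus
  have h1 : (1:ℝ) + Real.exp z ≤ 2 * Real.exp (max z 0) := by
    have h2 : Real.exp z ≤ Real.exp (max z 0) := Real.exp_le_exp.2 (le_max_left _ _)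
    have h3 : (1:ℝ) ≤ Real.exp (max z 0) := by
      rw [← Real.exp_zero]; exact Real.exp_le_exp.2 (le_max_right _ _)
    linarith
  calc Real.log (1 + Real.exp z) ≤ Real.log (2 * Real.exp (max z 0)) :=
        Real.log_le_log (by positivity) h1
  _ = Real.log 2 + max z 0 := by rw [Real.log_mul (by norm_num) (Real.exp_pos _).ne', Real.log_exp]
  _ = max z 0 + Real.log 2 := by ring

lemma softplus_cont : Continuous softplus := by
  unfold softplus
  exact (continuous_const.add Real.continuous_exp).log (fun z => (by positivity : (0:ℝ) < 1 + Real.exp z).ne')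

/-- For an integrable random variable `Δ` on a probability space,
`lim_{β → ∞} ∫ (2/β)·S(βΔ) dμ = 2·∫ max{Δ,0} dμ`. -/
theorem stmt3 {Ω : Type*} [MeasurableSpace Ω] (μ : Measure Ω) [IsProbabilityMeasure μ]
    (Δ : Ω → ℝ) (hΔ : Integrable Δ μ) :
    Tendsto (fun β : ℝ => ∫ ω, (2 / β) * softplus (β * Δ ω) ∂μ)
      atTop (nhds (2 * ∫ ω, max (Δ ω) 0 ∂μ)) := by
  have hmaxint : Integrable (fun ω => max (Δ ω) 0) μ := hΔ.pos_part
  have h2 : (2 : ℝ) * ∫ ω, max (Δ ω) 0 ∂μ = ∫ ω, 2 * max (Δ ω) 0 ∂μ := by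
    rw [integral_const_mul]
  rw [h2]
  apply tendsto_integral_filter_of_dominated_convergence
    (bound := fun ω => 2 * Real.log 2 + 2 * max (Δ ω) 0)
  · filter_upwards with β
    exact (continuous_const.mul (softplus_cont.comp (continuous_const.mul continuous_id))).comp_aestronglyMeasurable hΔ.1 |>.congr (by
      filter_upwards with ω; rfl)
  · filter_upwards [eventually_ge_atTop (1:ℝ)] with β hβ
    filter_upwards with ω
    have hβ0 : (0:ℝ) < β := lt_of_lt_of_le one_pos hβ
    have hnn : 0 ≤ softplus (β * Δ ω) := le_trans (le_max_right _ _) (softplus_lb _)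
    rw [Real.norm_eq_abs, abs_of_nonneg (by positivity)]
    have hub := softplus_ub (β * Δ ω)
    have hmax : β * max (Δ ω) 0 = max (β * Δ ω) 0 := by
      rw [mul_max_of_nonneg _ _ hβ0.le, mul_zero]
    rw [← hmax] at hub
    have : 2 / β * softplus (β * Δ ω) ≤ 2 / β * (β * max (Δ ω) 0 + Real.log 2) := by
      apply mul_le_mul_of_nonneg_left hub (by positivity)
    calc 2 / β * softplus (β * Δ ω) ≤ 2 / β * (β * max (Δ ω) 0 + Real.log 2) := this
    _ = 2 * max (Δ ω) 0 + (2 / β) * Real.log 2 := by field_simp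
    _ ≤ 2 * Real.log 2 + 2 * max (Δ ω) 0 := by
        have hlog : 0 ≤ Real.log 2 := Real.log_nonneg (by norm_num)
        have : 2 / β ≤ 2 := by
          rw [div_le_iff₀ hβ0]; linarith
        nlinarith
  · exact (integrable_const _).add (hmaxint.const_mul 2)
  · filter_upwards with ω
    -- squeeze
    have hsq : ∀ β : ℝ, 1 ≤ β →
        |2 / β * softplus (β * Δ ω) - 2 * max (Δ ω) 0| ≤ 2 / β * Real.log 2 := by
      intro β hβ
      have hβ0 : (0:ℝ) < β := lt_of_lt_of_le one_pos hβ
      have hmax : β * max (Δ ω) 0 = max (β * Δ ω) 0 := by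
        rw [mul_max_of_nonneg _ _ hβ0.le, mul_zero]
      have hlb := softplus_lb (β * Δ ω)
      have hub := softplus_ub (β * Δ ω)
      rw [← hmax] at hlb hub
      rw [abs_le]
      constructor
      · have : 2 / β * (β * max (Δ ω) 0) ≤ 2 / β * softplus (β * Δ ω) :=
          mul_le_mul_of_nonneg_left hlb (by positivity)
        have heq : 2 / β * (β * max (Δ ω) 0) = 2 * max (Δ ω) 0 := by field_simp
        have hpos : 0 ≤ 2 / β * Real.log 2 := by
          have : (0:ℝ) ≤ Real.log 2 := Real.log_nonneg (by norm_num)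
          positivity
        linarith [this, heq.ge]
      · have : 2 / β * softplus (β * Δ ω) ≤ 2 / β * (β * max (Δ ω) 0 + Real.log 2) :=
          mul_le_mul_of_nonneg_left hub (by positivity)
        have heq : 2 / β * (β * max (Δ ω) 0 + Real.log 2)
            = 2 * max (Δ ω) 0 + 2 / β * Real.log 2 := by field_simp
        linarith [this, heq.le]
    have hlim : Tendsto (fun β : ℝ => 2 / β * Real.log 2) atTop (nhds 0) := by
      have := (tendsto_const_nhds (x := (2 * Real.log 2 : ℝ))).div_atTop tendsto_id
      simpa [div_mul_eq_mul_div, mul_comm, mul_div_assoc] using this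
    have h0 : Tendsto (fun β : ℝ => 2 / β * softplus (β * Δ ω) - 2 * max (Δ ω) 0)
        atTop (nhds 0) := by
      apply squeeze_zero_norm' ?_ hlim
      filter_upwards [eventually_ge_atTop (1:ℝ)] with β hβ
      simpa [Real.norm_eq_abs] using hsq β hβ
    exact tendsto_sub_nhds_zero_iff.mp h0
end

section
/- Let I be a finite nonempty index set of contexts, V a finite nonempty vocabulary type. Suppose given: context weights D : I → ℝ with D(i) > 0 for all i; for each i ∈ I a data distribution d_i : V → ℝ with d_i(y) > 0 for all y ∈ V; and two families of strictly positive probability mass functions on V, p_i (the fine-tuned policy π_θ(· | context i)) and q_i (the aligned policy π_aligned(· | context i)), each summing to 1 over V. Define the loss ℓ̃ := ∑_{i ∈ I} D(i) · ∑_{y ∈ V} d_i(y) · max{ log q_i(y) − log p_i(y), 0 }. Then ℓ̃ ≥ 0 always, and ℓ̃ = 0 if and only if p_i(y) = q_i(y) for all i ∈ I and all y ∈ V. -/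
/-!
All weights are positive and every hinge term `max (log q - log p) 0` is nonnegative, so the loss
vanishes iff every hinge term does, i.e. iff `q i y ≤ p i y` everywhere. Two probability vectors
ordered pointwise have the same total mass, hence coincide.
-/

open Finset

theorem Fintype.sum_mul_eq_zero_iff_of_pos {ι R : Type*} [Fintype ι] [Semiring R] [PartialOrder R]
    [IsOrderedRing R] [NoZeroDivisors R] {w f : ι → R} (hw : ∀ i, 0 < w i) (hf : ∀ i, 0 ≤ f i) :
    ∑ i, w i * f i = 0 ↔ ∀ i, f i = 0 := by
  rw [Fintype.sum_eq_zero_iff_of_nonneg fun i => mul_nonneg (hw i).le (hf i)]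
  simp [funext_iff, (hw _).ne']

theorem Real.le_of_log_le_log {x y : ℝ} (hy : 0 < y) (h : Real.log x ≤ Real.log y) : x ≤ y := by
  simpa [Real.exp_log hy] using Real.le_exp_of_log_le h

theorem stmt10_general {I V : Type*} [Fintype I] [Fintype V]
    (D : I → ℝ) (hD : ∀ i, 0 < D i)
    (d : I → V → ℝ) (hd : ∀ i y, 0 < d i y)
    (p q : I → V → ℝ) (hp : ∀ i y, 0 < p i y)
    (hp1 : ∀ i, ∑ y, p i y = 1) (hq1 : ∀ i, ∑ y, q i y = 1) :
    0 ≤ ∑ i, D i * ∑ y, d i y * max (Real.log (q i y) - Real.log (p i y)) 0 ∧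
    ((∑ i, D i * ∑ y, d i y * max (Real.log (q i y) - Real.log (p i y)) 0) = 0 ↔
      ∀ i y, p i y = q i y) := by
  have hinge_nonneg : ∀ i y, 0 ≤ max (Real.log (q i y) - Real.log (p i y)) 0 :=
    fun _ _ => le_max_right _ _
  have inner_nonneg : ∀ i, 0 ≤ ∑ y, d i y * max (Real.log (q i y) - Real.log (p i y)) 0 :=
    fun i => sum_nonneg fun y _ => mul_nonneg (hd i y).le (hinge_nonneg i y)
  refine ⟨sum_nonneg fun i _ => mul_nonneg (hD i).le (inner_nonneg i), ?_⟩
  simp only [Fintype.sum_mul_eq_zero_iff_of_pos hD inner_nonneg,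
    Fintype.sum_mul_eq_zero_iff_of_pos (hd _) (hinge_nonneg _), max_eq_right_iff, sub_nonpos]
  refine ⟨fun hlog i y => ?_, fun heq i y => by rw [heq i y]⟩
  have hle : ∀ y, q i y ≤ p i y := fun y => Real.le_of_log_le_log (hp i y) (hlog i y)
  exact ((sum_eq_sum_iff_of_le fun y _ => hle y).1 (by rw [hp1, hq1]) y (mem_univ y)).symm

/-- The hinge-type limiting loss
`ℓ̃ = ∑_i D(i) · ∑_y d_i(y) · max{log q_i(y) − log p_i(y), 0}` over positive context
weights `D`, strictly positive data distributions `d_i`, and strictly positive probability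
mass functions `p_i` (fine-tuned) and `q_i` (aligned), is nonnegative, and vanishes
if and only if `p_i(y) = q_i(y)` for all contexts `i` and tokens `y`. -/
theorem stmt10 {I V : Type*} [Fintype I] [Nonempty I] [Fintype V] [Nonempty V]
    (D : I → ℝ) (hD : ∀ i, 0 < D i)
    (d : I → V → ℝ) (hd : ∀ i y, 0 < d i y)
    (p q : I → V → ℝ) (hp : ∀ i y, 0 < p i y) (hq : ∀ i y, 0 < q i y)
    (hp1 : ∀ i, ∑ y, p i y = 1) (hq1 : ∀ i, ∑ y, q i y = 1) :
    0 ≤ ∑ i, D i * ∑ y, d i y * max (Real.log (q i y) - Real.log (p i y)) 0 ∧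
    ((∑ i, D i * ∑ y, d i y * max (Real.log (q i y) - Real.log (p i y)) 0) = 0 ↔
      ∀ i y, p i y = q i y) :=
  stmt10_general D hD d hd p q hp hp1 hq1
end
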